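/- Let p_{1̄ 2̄}(n) = 1 − (2⟨K_n⟩/(n-1) − (1−μ)(K_n/(n-1))((K_n−1)/(n-2))) with ⟨K_n⟩ = μ + (1−μ)K_n, K_n = O(log n), K_n ≥ 2, μ ∈ (0,1) fixed, and let u ≥ 1 be a fixed integer. Then (p_{1̄ 2̄}(n))^{n−u} / e^{−2⟨K_n⟩} → 1 as n → ∞. -/

import Mathlib

open Filter Real

/-- `p_{1̄ 2̄}`: probability a third node selects neither of two fixed nodes, in the form
`1 - (2⟨Kn⟩/(n-1) - (1-μ)(Kn/(n-1))((Kn-1)/(n-2)))` with `⟨Kn⟩ = μ + (1-μ)Kn`. -/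
noncomputable def pnb1nb2 (μ : ℝ) (K : ℕ → ℕ) (n : ℕ) : ℝ :=
  1 - (2 * (μ + (1 - μ) * K n) / ((n : ℝ) - 1) -
    (1 - μ) * ((K n : ℝ) / ((n : ℝ) - 1)) * (((K n : ℝ) - 1) / ((n : ℝ) - 2)))

open Topology

/-! Write `pnb1nb2 μ K n = 1 - aₙ`. Since `aₙ = O(Kₙ / n)`, the expansion
`log (1 - a) = -a + O(a²)` gives `(n - u) log (1 - aₙ) = -(n - u) aₙ + O(Kₙ² / n)`, and a direct
computation shows `(n - u) aₙ = 2⟨Kₙ⟩ + O(Kₙ² / n)`. So the limit holds as soon as `Kₙ² = o(n)`,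
which `Kₙ = O(log n)` guarantees. -/

theorem abs_log_one_sub_add_le {x : ℝ} (hx : |x| ≤ 1 / 2) : |log (1 - x) + x| ≤ 2 * x ^ 2 := by
  have h := abs_log_sub_add_sum_range_le (hx.trans_lt (by norm_num)) 1
  simp only [Finset.sum_range_one, zero_add, pow_one, Nat.cast_zero, div_one] at h
  rw [add_comm]
  calc _ ≤ |x| ^ 2 / (1 - |x|) := h
    _ ≤ |x| ^ 2 / (1 / 2) := by gcongr; linarith
    _ = 2 * x ^ 2 := by rw [sq_abs]; ring

theorem tendsto_one_sub_pow_div_exp {ι : Type*} {l : Filter ι} {a c : ι → ℝ} {m : ι → ℕ}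
    (ha : Tendsto a l (𝓝 0)) (hma : Tendsto (fun i => m i * a i ^ 2) l (𝓝 0))
    (hmac : Tendsto (fun i => m i * a i - c i) l (𝓝 0)) :
    Tendsto (fun i => (1 - a i) ^ m i / exp (-c i)) l (𝓝 1) := by
  have hsmall : ∀ᶠ i in l, |a i| ≤ 1 / 2 := by
    simpa using ha.abs.eventually (ge_mem_nhds (by norm_num : |(0 : ℝ)| < 1 / 2))
  have hlog : Tendsto (fun i => m i * (log (1 - a i) + a i)) l (𝓝 0) := by
    refine squeeze_zero_norm' ?_ (by simpa using hma.const_mul 2)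
    filter_upwards [hsmall] with i hi
    rw [norm_mul, Real.norm_natCast, Real.norm_eq_abs]
    nlinarith [abs_log_one_sub_add_le hi, (m i).cast_nonneg (α := ℝ)]
  have hexp : Tendsto (fun i => exp (m i * (log (1 - a i) + a i) - (m i * a i - c i))) l
      (𝓝 1) := by
    simpa using (hlog.sub hmac).rexp
  refine hexp.congr' ?_
  filter_upwards [hsmall] with i hi
  have hpos : 0 < 1 - a i := by linarith [le_abs_self (a i)]
  rw [show m i * (log (1 - a i) + a i) - (m i * a i - c i) = m i * log (1 - a i) + c i by ring,
    exp_add, exp_nat_mul, exp_log hpos, exp_neg, div_inv_eq_mul]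

theorem tendsto_natCast_div_sub_atTop (c : ℝ) :
    Tendsto (fun n : ℕ => (n : ℝ) / (n - c)) atTop (𝓝 1) := by
  simpa only [sub_eq_add_neg] using tendsto_natCast_div_add_atTop (-c)

theorem tendsto_sq_div_natCast_of_le_mul_log {K : ℕ → ℕ} {C : ℝ}
    (hK : ∀ᶠ n : ℕ in atTop, (K n : ℝ) ≤ C * log n) :
    Tendsto (fun n => (K n : ℝ) ^ 2 / n) atTop (𝓝 0) := by
  have hlog : Tendsto (fun n : ℕ => C ^ 2 * (log n ^ 2 / n)) atTop (𝓝 0) := by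
    simpa using ((tendsto_pow_log_div_mul_add_atTop 1 0 2 one_ne_zero).comp
      tendsto_natCast_atTop_atTop).const_mul (C ^ 2)
  refine squeeze_zero' (.of_forall fun n => by positivity) ?_ hlog
  filter_upwards [hK] with n hn
  rw [← mul_div_assoc, ← mul_pow]
  gcongr

theorem tendsto_div_natCast_of_sq {K : ℕ → ℕ}
    (hK : Tendsto (fun n => (K n : ℝ) ^ 2 / n) atTop (𝓝 0)) :
    Tendsto (fun n => (K n : ℝ) / n) atTop (𝓝 0) := by
  refine squeeze_zero (fun n => by positivity) (fun n => ?_) hK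
  gcongr
  exact_mod_cast Nat.le_self_pow two_ne_zero (K n)

/- In the next three lemmas the sequence is, for `n > 2`, a polynomial in `1/n`, `Kₙ/n`, `Kₙ²/n`
(all tending to `0`) and `n/(n-1)`, `n/(n-2)` (tending to `1`) that vanishes at the limit point. -/

theorem tendsto_one_sub_pnb1nb2 (μ : ℝ) {K : ℕ → ℕ}
    (hK : Tendsto (fun n => (K n : ℝ) ^ 2 / n) atTop (𝓝 0)) :
    Tendsto (fun n => 1 - pnb1nb2 μ K n) atTop (𝓝 0) := by
  have hx := tendsto_one_div_atTop_nhds_zero_nat (𝕜 := ℝ)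
  have hy := tendsto_div_natCast_of_sq hK
  have h := ((((hx.const_mul μ).add (hy.const_mul (1 - μ))).const_mul 2).mul
    (tendsto_natCast_div_sub_atTop 1)).sub ((((hy.const_mul (1 - μ)).mul (hy.sub hx)).mul
    (tendsto_natCast_div_sub_atTop 1)).mul (tendsto_natCast_div_sub_atTop 2))
  convert h.congr' ?_ using 2
  · simp
  filter_upwards [tendsto_natCast_atTop_atTop.eventually_gt_atTop (2 : ℝ)] with n hn
  have hn1 : (n : ℝ) - 1 ≠ 0 := by linarith
  have hn2 : (n : ℝ) - 2 ≠ 0 := by linarith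
  unfold pnb1nb2
  field_simp
  ring

theorem tendsto_mul_one_sub_pnb1nb2 (μ : ℝ) {K : ℕ → ℕ}
    (hK : Tendsto (fun n => (K n : ℝ) ^ 2 / n) atTop (𝓝 0)) :
    Tendsto (fun n => K n * (1 - pnb1nb2 μ K n)) atTop (𝓝 0) := by
  have hx := tendsto_one_div_atTop_nhds_zero_nat (𝕜 := ℝ)
  have hy := tendsto_div_natCast_of_sq hK
  have h := ((((hy.const_mul μ).add (hK.const_mul (1 - μ))).const_mul 2).mul
    (tendsto_natCast_div_sub_atTop 1)).sub ((((hK.const_mul (1 - μ)).mul (hy.sub hx)).mul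
    (tendsto_natCast_div_sub_atTop 1)).mul (tendsto_natCast_div_sub_atTop 2))
  convert h.congr' ?_ using 2
  · simp
  filter_upwards [tendsto_natCast_atTop_atTop.eventually_gt_atTop (2 : ℝ)] with n hn
  have hn1 : (n : ℝ) - 1 ≠ 0 := by linarith
  have hn2 : (n : ℝ) - 2 ≠ 0 := by linarith
  unfold pnb1nb2
  field_simp
  ring

theorem tendsto_natCast_sub_mul_one_sub_pnb1nb2_sub (μ : ℝ) {K : ℕ → ℕ} (u : ℕ)
    (hK : Tendsto (fun n => (K n : ℝ) ^ 2 / n) atTop (𝓝 0)) :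
    Tendsto (fun n => ((n - u : ℕ) : ℝ) * (1 - pnb1nb2 μ K n) - 2 * (μ + (1 - μ) * K n))
      atTop (𝓝 0) := by
  have hx := tendsto_one_div_atTop_nhds_zero_nat (𝕜 := ℝ)
  have hy := tendsto_div_natCast_of_sq hK
  have h := (((((hx.const_mul μ).add (hy.const_mul (1 - μ))).const_mul 2).mul
    (tendsto_natCast_div_sub_atTop 1)).sub ((((hK.sub hy).const_mul (1 - μ)).mul
    (tendsto_natCast_div_sub_atTop 1)).mul (tendsto_natCast_div_sub_atTop 2))).sub
    ((tendsto_one_sub_pnb1nb2 μ hK).const_mul (u : ℝ))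
  convert h.congr' ?_ using 2
  · simp
  filter_upwards [tendsto_natCast_atTop_atTop.eventually_gt_atTop (2 : ℝ),
    eventually_ge_atTop u] with n hn hun
  have hn1 : (n : ℝ) - 1 ≠ 0 := by linarith
  have hn2 : (n : ℝ) - 2 ≠ 0 := by linarith
  rw [Nat.cast_sub hun]
  unfold pnb1nb2
  field_simp
  ring

theorem tendsto_pnb1nb2_pow_div_exp (μ : ℝ) {K : ℕ → ℕ} (u : ℕ)
    (hK : Tendsto (fun n => (K n : ℝ) ^ 2 / n) atTop (𝓝 0)) :
    Tendsto (fun n : ℕ =>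
      pnb1nb2 μ K n ^ (n - u) / exp (-2 * (μ + (1 - μ) * K n))) atTop (𝓝 1) := by
  have ha := tendsto_one_sub_pnb1nb2 μ hK
  have hmac := tendsto_natCast_sub_mul_one_sub_pnb1nb2_sub μ u hK
  have hca : Tendsto (fun n => 2 * (μ + (1 - μ) * K n) * (1 - pnb1nb2 μ K n)) atTop (𝓝 0) := by
    convert ((ha.const_mul μ).add
      ((tendsto_mul_one_sub_pnb1nb2 μ hK).const_mul (1 - μ))).const_mul 2 using 2 <;> ring
  -- `m a² = (m a - c) a + c a`
  have hma : Tendsto (fun n => ((n - u : ℕ) : ℝ) * (1 - pnb1nb2 μ K n) ^ 2) atTop (𝓝 0) := by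
    convert (hmac.mul ha).add hca using 2 <;> ring
  simpa only [sub_sub_cancel, neg_mul] using tendsto_one_sub_pow_div_exp ha hma hmac

theorem pow_neither_asymp_general (μ : ℝ) (K : ℕ → ℕ)
    (hKO : ∃ C : ℝ, 0 < C ∧ ∀ᶠ n : ℕ in atTop, (K n : ℝ) ≤ C * Real.log n)
    (u : ℕ) :
    Tendsto (fun n : ℕ =>
      (pnb1nb2 μ K n) ^ (n - u) / Real.exp (-2 * (μ + (1 - μ) * K n)))
      atTop (nhds 1) := by
  obtain ⟨C, -, hKC⟩ := hKO
  exact tendsto_pnb1nb2_pow_div_exp μ u (tendsto_sq_div_natCast_of_le_mul_log hKC)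

/-- If `Kn = O(log n)`, `Kn ≥ 2`, `μ ∈ (0,1)` fixed and `u ≥ 1` a fixed integer, then
`(p_{1̄ 2̄})^(n-u) / e^{-2⟨Kn⟩} → 1`, i.e. `(p_{1̄ 2̄})^(n-u) = e^{-2⟨Kn⟩}(1+o(1))`. -/
theorem pow_neither_asymp (μ : ℝ) (hμ0 : 0 < μ) (hμ1 : μ < 1)
    (K : ℕ → ℕ) (hK2 : ∀ n, 2 ≤ K n)
    (hKO : ∃ C : ℝ, 0 < C ∧ ∀ᶠ n : ℕ in atTop, (K n : ℝ) ≤ C * Real.log n)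
    (u : ℕ) (hu : 1 ≤ u) :
    Tendsto (fun n : ℕ =>
      (pnb1nb2 μ K n) ^ (n - u) / Real.exp (-2 * (μ + (1 - μ) * K n)))
      atTop (nhds 1) :=
  pow_neither_asymp_general μ K hKO u
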